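/- Let f : ℕ → ℕ be a monotone map with all values finite and unbounded image. Then the two strongly stable ideals obtained from the lex cut at f and at its dual Df agree: { Γg : g large, g ≺_lex f } = { Λh : h small, h ≻_lex Df }. -/

import Mathlib

/-!
Encoding conventions (used throughout):
* The paper's positive integers `ℕ = {1,2,…}` are encoded by Lean's `ℕ = {0,1,2,…}`
  via the order isomorphism `n ↦ n - 1`, in both the domain and the finite part of
  the codomain `ℕ̂ = ℕ ∪ {∞}`, the latter encoded as `ℕ∞`.  Under this shift the
  duality `D` is given by the same formula `Df(p) = min { q | f(q) > p }`.
* Variables `x_1, x_2, …` are indexed by Lean's `0, 1, 2, …`; monomials are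
  finitely supported functions `ℕ → ℕ` (exponent vectors); exponents are unshifted.
-/

noncomputable section

/-- Maps `ℕ → ℕ̂`. -/
abbrev NNhat := ℕ → ℕ∞

/-- SmallMap maps: all values bounded by some natural number. -/
def SmallMap (f : NNhat) : Prop := ∃ N : ℕ, ∀ n, f n ≤ (N : ℕ∞)

/-- LargeMap maps: some value equals `∞`. -/
def LargeMap (f : NNhat) : Prop := ∃ n, f n = ⊤

/-- Maps with all values finite and unbounded image. -/
def UnbFinMap (f : NNhat) : Prop := (∀ n, f n ≠ ⊤) ∧ ∀ N : ℕ, ∃ n, (N : ℕ∞) < f n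

/-- The duality `D`: `Df(p) = min { q : f(q) > p }`, the min of the empty set being `∞`. -/
def Ddual (f : NNhat) : NNhat := fun p =>
  sInf ((fun q : ℕ => (q : ℕ∞)) '' {q : ℕ | (p : ℕ∞) < f q})

/-- The poset `Hom(ℕ, ℕ̂)` of monotone maps, ordered pointwise. -/
abbrev HomNN := {f : NNhat // Monotone f}

/-- The topology on `Hom(ℕ, ℕ̂)` with basis the intervals `U(f̲, f̄)` with `f̲` small
and `f̄` large. -/
instance (priority := 10000) : TopologicalSpace HomNN :=
  TopologicalSpace.generateFrom
    {S | ∃ a b : HomNN, SmallMap a.1 ∧ LargeMap b.1 ∧ S = {f : HomNN | a ≤ f ∧ f ≤ b}}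

/-- Monomials: finitely supported functions `ℕ → ℕ` (exponent vectors). -/
def Mon : Set (ℕ → ℕ) := {u | (Function.support u).Finite}

/-- `Γ f = ∏_{f(i) < ∞} x_{f(i)}` : the exponent of `x_j` is `#{i | f(i) = j}`. -/
def Gmap (f : NNhat) : ℕ → ℕ := fun j => Nat.card {i : ℕ // f i = (j : ℕ∞)}

/-- `Λ f = ∏_{i ≥ 1} x_i^{f(i) - f(i-1)}` (with the convention `f(0) = 1`, i.e. the
shifted convention `f(-1) = 0`). -/
def Lmap (f : NNhat) : ℕ → ℕ := fun i =>
  match i with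
  | 0 => (f 0).toNat
  | k + 1 => (f (k + 1)).toNat - (f k).toNat

/-- The exponent vector of the variable `x_i`. -/
def xvar (i : ℕ) : ℕ → ℕ := fun k => if k = i then 1 else 0

/-- One generating step of the strongly stable order: `stStep a b` means `a ≥_st b`
by one of the defining relations `x_i·w ≥_st x_j·w` (`i ≤ j`) or `x_i·b ≥_st b`. -/
def stStep (a b : ℕ → ℕ) : Prop :=
  (∃ i j w, i ≤ j ∧ a = w + xvar i ∧ b = w + xvar j) ∨ (∃ i, a = b + xvar i)

/-- The strongly stable order: `stGE u v` means `u ≥_st v`. -/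
def stGE (u v : ℕ → ℕ) : Prop := Relation.ReflTransGen stStep u v

/-- A strongly stable ideal: a set of monomials upward closed under `≥_st`. -/
def IsSStableIdeal (I : Set (ℕ → ℕ)) : Prop :=
  I ⊆ Mon ∧ ∀ u ∈ I, ∀ v, stGE v u → v ∈ I

/-- The smallest strongly stable ideal containing the set `G` of monomials. -/
def sstSpan (G : Set (ℕ → ℕ)) : Set (ℕ → ℕ) := {v | ∃ u ∈ G, stGE v u}

/-- `Γ(ℐ^L)`: the set of monomials `Γ f` for `f` large in `ℐ`. -/
def GammaIdeal (ℐ : Set HomNN) : Set (ℕ → ℕ) :=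
  {u | ∃ f ∈ ℐ, LargeMap f.1 ∧ u = Gmap f.1}

/-- `Λ(ℱ_S)`: the set of monomials `Λ f` for `f` small in `ℱ`. -/
def LambdaIdeal (ℱ : Set HomNN) : Set (ℕ → ℕ) :=
  {u | ∃ f ∈ ℱ, SmallMap f.1 ∧ u = Lmap f.1}

/-- `I` is a dualizable strongly stable ideal with dual strongly stable ideal `J`:
the open poset ideal `ℐ` corresponding to `I` is regular open, and `J` is obtained
from the interior `ℱ` of the complement of `ℐ` as `Λ(ℱ_S)`. -/
def IsDualPair (I J : Set (ℕ → ℕ)) : Prop :=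
  ∃ ℐ : Set HomNN, IsOpen ℐ ∧ IsLowerSet ℐ ∧ ℐ = interior (closure ℐ) ∧
    GammaIdeal ℐ = I ∧ LambdaIdeal (interior ℐᶜ) = J

/-- Strict lexicographic order `f ≻_lex g`: at the least index where they differ,
`f` is larger. -/
def lexGT (f g : NNhat) : Prop := ∃ r, (∀ i < r, f i = g i) ∧ g r < f r

/-- `f ⪰_lex g`. -/
def lexGE (f g : NNhat) : Prop := f = g ∨ lexGT f g

/-- The single monomial `x_{i+1}^e` (Lean variable index `i`). -/
def singleMon (i e : ℕ) : ℕ → ℕ := fun j => if j = i then e else 0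

end


noncomputable section

private lemma Ddual_adj {f : NNhat} (hf : Monotone f) (n p : ℕ) :
    (n : ℕ∞) < Ddual f p ↔ f n ≤ (p : ℕ∞) := by
  constructor
  · intro h
    by_contra hc
    push_neg at hc
    exact absurd h (not_lt.2 (sInf_le ⟨n, hc, rfl⟩))
  · intro h
    refine lt_of_lt_of_le (by exact_mod_cast Nat.lt_succ_self n : (n:ℕ∞) < ((n+1 : ℕ) : ℕ∞)) ?_
    refine le_sInf ?_
    rintro _ ⟨q, hq, rfl⟩
    have hnq : n < q := by
      by_contra hq'
      push_neg at hq'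
      exact absurd (lt_of_lt_of_le hq (le_trans (hf hq') h)) (lt_irrefl _)
    show ((n+1 : ℕ) : ℕ∞) ≤ (q : ℕ∞)
    exact_mod_cast hnq

private lemma Ddual_mono (f : NNhat) : Monotone (Ddual f) := by
  intro p q hpq
  refine sInf_le_sInf (Set.image_mono ?_)
  intro r hr
  simp only [Set.mem_setOf_eq] at hr ⊢
  exact lt_of_le_of_lt (by exact_mod_cast hpq) hr

private lemma Ddual_ddual {f : NNhat} (hf : Monotone f) : Ddual (Ddual f) = f := by
  funext n
  have hset : {p : ℕ | (n : ℕ∞) < Ddual f p} = {p : ℕ | f n ≤ (p : ℕ∞)} := by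
    ext p; exact Ddual_adj hf n p
  show sInf _ = f n
  rw [show (fun q : ℕ => (q : ℕ∞)) '' {q : ℕ | (n : ℕ∞) < Ddual f q}
      = (fun q : ℕ => (q : ℕ∞)) '' {p : ℕ | f n ≤ (p : ℕ∞)} from by rw [hset]]
  rcases eq_or_ne (f n) ⊤ with h | h
  · rw [h]
    refine (congrArg sInf ?_).trans sInf_empty
    ext x
    simp only [Set.mem_image, Set.mem_setOf_eq, Set.mem_empty_iff_false, iff_false]
    rintro ⟨p, hp, rfl⟩
    exact absurd hp (by simp)
  · lift f n to ℕ using h with m hm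
    refine le_antisymm (sInf_le ⟨m, by simp, rfl⟩) (le_sInf ?_)
    rintro _ ⟨p, hp, rfl⟩
    exact hp

private lemma small_of_large {g : NNhat} (hg : LargeMap g) : SmallMap (Ddual g) := by
  obtain ⟨n₀, hn₀⟩ := hg
  refine ⟨n₀, fun p => sInf_le ⟨n₀, ?_, rfl⟩⟩
  simp [Set.mem_setOf_eq, hn₀]

private lemma large_of_small {h : NNhat} (hh : SmallMap h) : LargeMap (Ddual h) := by
  obtain ⟨N, hN⟩ := hh
  refine ⟨N, ?_⟩
  show sInf _ = ⊤
  refine (congrArg sInf ?_).trans sInf_empty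
  ext x
  simp only [Set.mem_image, Set.mem_setOf_eq, Set.mem_empty_iff_false, iff_false]
  rintro ⟨q, hq, rfl⟩
  exact absurd hq (not_lt.2 (hN q))

private lemma lex_dual_aux {f g : NNhat} (r : ℕ) (heq : ∀ i < r, f i = g i) (i : ℕ)
    (hirf : (i : ℕ∞) < f r) (hirg : (i : ℕ∞) < g r) : Ddual g i ≤ Ddual f i := by
  refine le_sInf ?_
  rintro _ ⟨q, hq, rfl⟩
  rcases lt_or_ge q r with h1 | h1
  · exact sInf_le ⟨q, by rw [Set.mem_setOf_eq, ← heq q h1]; exact hq, rfl⟩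
  · refine le_trans (sInf_le ⟨r, hirg, rfl⟩) ?_
    show (r : ℕ∞) ≤ (q : ℕ∞)
    exact_mod_cast h1

private lemma lex_dual {f g : NNhat} (hf : Monotone f) (hg : Monotone g) (h : lexGT f g) :
    lexGT (Ddual g) (Ddual f) := by
  obtain ⟨r, heq, hlt⟩ := h
  have hgr : g r ≠ ⊤ := (hlt.trans_le le_top).ne
  lift g r to ℕ using hgr with p hp
  refine ⟨p, fun i hi => ?_, ?_⟩
  · have hip : (i : ℕ∞) < (p : ℕ∞) := by exact_mod_cast hi
    have hif : (i : ℕ∞) < f r := hip.trans hlt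
    have hig : (i : ℕ∞) < g r := by rw [← hp]; exact hip
    exact le_antisymm (lex_dual_aux r heq i hif hig)
      (lex_dual_aux r (fun j hj => (heq j hj).symm) i hig hif)
  · have h1 : Ddual f p ≤ (r : ℕ∞) := sInf_le ⟨r, hlt, rfl⟩
    have h2 : (r : ℕ∞) < Ddual g p := (Ddual_adj hg r p).2 (le_of_eq hp.symm)
    exact h1.trans_lt h2

private lemma gmap_eq {g : NNhat} (hg : Monotone g) (hl : LargeMap g) :
    Lmap (Ddual g) = Gmap g := by
  obtain ⟨n₀, hn₀⟩ := hl
  have hfin : ∀ p : ℕ, Ddual g p ≠ ⊤ := by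
    intro p
    have h1 : Ddual g p ≤ (n₀ : ℕ∞) :=
      sInf_le ⟨n₀, by simp [Set.mem_setOf_eq, hn₀], rfl⟩
    exact (h1.trans_lt (by exact_mod_cast lt_top_iff_ne_top.2 (ENat.coe_ne_top n₀))).ne
  set m : ℕ → ℕ := fun p => (Ddual g p).toNat with hm
  have hmc : ∀ p, ((m p : ℕ) : ℕ∞) = Ddual g p := fun p => ENat.coe_toNat (hfin p)
  have hkey : ∀ i p : ℕ, i < m p ↔ g i ≤ (p : ℕ∞) := by
    intro i p
    rw [← Ddual_adj hg i p, ← hmc p]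
    exact_mod_cast Iff.rfl
  funext j
  cases j with
  | zero =>
    have hset : {i : ℕ | g i = ((0:ℕ) : ℕ∞)} = Set.Iio (m 0) := by
      ext i
      simp only [Set.mem_setOf_eq, Set.mem_Iio, hkey i 0]
      constructor
      · intro hgi; exact le_of_eq hgi
      · intro hle; exact le_antisymm hle (by simp)
    show (Ddual g 0).toNat = Nat.card {i : ℕ // g i = ((0:ℕ) : ℕ∞)}
    rw [show Nat.card {i : ℕ // g i = ((0:ℕ) : ℕ∞)} = Nat.card (Set.Iio (m 0)) from
      Nat.card_congr (Equiv.setCongr hset), Nat.card_eq_card_toFinset, Set.toFinset_Iio, Nat.card_Iio]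
  | succ k =>
    have hset : {i : ℕ | g i = ((k+1 : ℕ) : ℕ∞)} = Set.Ico (m k) (m (k+1)) := by
      ext i
      simp only [Set.mem_setOf_eq, Set.mem_Ico]
      constructor
      · intro hgi
        refine ⟨?_, (hkey i (k+1)).2 (le_of_eq hgi)⟩
        by_contra hc
        push_neg at hc
        have h2 := (hkey i k).1 hc
        rw [hgi] at h2
        exact absurd (by exact_mod_cast h2 : (k+1 : ℕ) ≤ k) (by omega)
      · rintro ⟨h1, h2⟩
        have hle : g i ≤ ((k+1 : ℕ) : ℕ∞) := (hkey i (k+1)).1 h2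
        have hgt : ¬ g i ≤ ((k : ℕ) : ℕ∞) := fun hc => absurd ((hkey i k).2 hc) (not_lt.2 h1)
        have hne : g i ≠ ⊤ :=
          (hle.trans_lt (by exact_mod_cast lt_top_iff_ne_top.2 (ENat.coe_ne_top (k+1)))).ne
        lift g i to ℕ using hne with t ht
        have e2 : t ≤ k + 1 := by exact_mod_cast hle
        have e1 : ¬ t ≤ k := fun hc => hgt (by exact_mod_cast hc)
        exact_mod_cast (by omega : t = k + 1)
    show (Ddual g (k+1)).toNat - (Ddual g k).toNat = Nat.card {i : ℕ // g i = ((k+1:ℕ) : ℕ∞)}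
    rw [show Nat.card {i : ℕ // g i = ((k+1:ℕ) : ℕ∞)} = Nat.card (Set.Ico (m k) (m (k+1))) from
      Nat.card_congr (Equiv.setCongr hset), Nat.card_eq_card_toFinset, Set.toFinset_Ico, Nat.card_Ico]

end

noncomputable section

/-- for `f` monotone with finite values and unbounded image,
`{ Γg : g large, g ≺_lex f } = { Λh : h small, h ≻_lex Df }`. -/
theorem stmt15 (f : NNhat) (hf : Monotone f) (hfin : ∀ n, f n ≠ ⊤)
    (hunb : ∀ N : ℕ, ∃ n, (N : ℕ∞) < f n) :
    {u | ∃ g : NNhat, Monotone g ∧ LargeMap g ∧ lexGT f g ∧ u = Gmap g} =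
    {u | ∃ h : NNhat, Monotone h ∧ SmallMap h ∧ lexGT h (Ddual f) ∧ u = Lmap h} := by
  ext u
  simp only [Set.mem_setOf_eq]
  constructor
  · rintro ⟨g, hgm, hgl, hlex, rfl⟩
    exact ⟨Ddual g, Ddual_mono g, small_of_large hgl, lex_dual hf hgm hlex,
      (gmap_eq hgm hgl).symm⟩
  · rintro ⟨h, hhm, hhs, hlex, rfl⟩
    refine ⟨Ddual h, Ddual_mono h, large_of_small hhs, ?_, ?_⟩
    · have hd := lex_dual hhm (Ddual_mono f) hlex
      rwa [Ddual_ddual hf] at hd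
    · calc Lmap h = Lmap (Ddual (Ddual h)) := by rw [Ddual_ddual hhm]
        _ = Gmap (Ddual h) := gmap_eq (Ddual_mono h) (large_of_small hhs)


end
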